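/- Let p ∈ (0,1], let U be a p-Banach space of almost universal disposition for finite-dimensional p-Banach spaces, let ε ∈ (0,1), let X be a subspace of U, let Y be a finite-dimensional p-Banach space, and let f : X → Y be a strict ε-isometry. Then for every δ > 0 there exists a δ-isometry g : Y → U such that N(g (f x) − x) < ε * N x for every nonzero x ∈ X. -/

import Mathlib

/- Common framework: p-normed and p-Banach spaces, following the paper's definitions. -/

namespace PGurarii

/-- A `p`-norm on a real vector space: `N x = 0 ↔ x = 0`, absolute homogeneity, and the
`p`-triangle inequality `N (x + y) ^ p ≤ N x ^ p + N y ^ p` (values in `ℝ₊`). -/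
structure PNorm (p : ℝ) (X : Type) [AddCommGroup X] [Module ℝ X] where
  N : X → ℝ
  nonneg : ∀ x : X, 0 ≤ N x
  eq_zero_iff : ∀ x : X, N x = 0 ↔ x = 0
  smul_eq : ∀ (a : ℝ) (x : X), N (a • x) = |a| * N x
  add_pow_le : ∀ x y : X, N (x + y) ^ p ≤ N x ^ p + N y ^ p

/-- Completeness (sequential) for the induced metric `d(x,y) = N (x - y) ^ p`. -/
def IsCompleteP (p : ℝ) {X : Type} [AddCommGroup X] [Module ℝ X] (NX : PNorm p X) : Prop :=
  ∀ u : ℕ → X,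
    (∀ ε : ℝ, 0 < ε → ∃ n₀ : ℕ, ∀ m ≥ n₀, ∀ n ≥ n₀, NX.N (u m - u n) ^ p < ε) →
    ∃ x : X, ∀ ε : ℝ, 0 < ε → ∃ n₀ : ℕ, ∀ n ≥ n₀, NX.N (u n - x) ^ p < ε

/-- Separability for the induced metric topology. -/
def IsSeparableP (p : ℝ) {X : Type} [AddCommGroup X] [Module ℝ X] (NX : PNorm p X) : Prop :=
  ∃ D : Set X, D.Countable ∧ ∀ x : X, ∀ ε : ℝ, 0 < ε → ∃ y ∈ D, NX.N (x - y) ^ p < ε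

/-- A subspace is closed for the induced metric topology. -/
def IsClosedSubP (p : ℝ) {X : Type} [AddCommGroup X] [Module ℝ X] (NX : PNorm p X)
    (S : Submodule ℝ X) : Prop :=
  ∀ x : X, (∀ ε : ℝ, 0 < ε → ∃ y ∈ S, NX.N (x - y) ^ p < ε) → x ∈ S

/-- The restriction of a `p`-norm to a subspace. -/
def PNorm.restrict {p : ℝ} {X : Type} [AddCommGroup X] [Module ℝ X]
    (NX : PNorm p X) (S : Submodule ℝ X) : PNorm p S where
  N x := NX.N x
  nonneg x := NX.nonneg x
  eq_zero_iff x := by rw [NX.eq_zero_iff]; exact ZeroMemClass.coe_eq_zero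
  smul_eq a x := NX.smul_eq a x
  add_pow_le x y := NX.add_pow_le x y

/-- A `p`-Banach space: a real vector space with a `p`-norm, complete for the induced metric. -/
structure PBanach (p : ℝ) where
  carrier : Type
  [addCommGroup : AddCommGroup carrier]
  [module : Module ℝ carrier]
  pnorm : PNorm p carrier
  complete : IsCompleteP p pnorm

attribute [instance] PBanach.addCommGroup PBanach.module

/-- `U` is of almost universal disposition for finite-dimensional `p`-Banach spaces: for every
`ε > 0`, every isometry from a subspace `X` of `U` (with the restricted `p`-norm) into a
finite-dimensional `p`-Banach space `Y` extends, after an `ε`-isometry `Y → U`, the inclusion. -/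
def AUD (p : ℝ) (U : Type) [AddCommGroup U] [Module ℝ U] (NU : PNorm p U) : Prop :=
  ∀ ε : ℝ, 0 < ε → ∀ Y : PBanach p, FiniteDimensional ℝ Y.carrier →
    ∀ (Xs : Submodule ℝ U) (g : Xs →ₗ[ℝ] Y.carrier),
      (∀ x : Xs, Y.pnorm.N (g x) = NU.N (x : U)) →
      ∃ f : Y.carrier →ₗ[ℝ] U,
        (∀ y, (1 - ε) * Y.pnorm.N y ≤ NU.N (f y) ∧ NU.N (f y) ≤ (1 + ε) * Y.pnorm.N y) ∧
        ∀ x : Xs, f (g x) = (x : U)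

/-- `U` is of universal disposition for separable `p`-Banach spaces. -/
def UD (p : ℝ) (U : Type) [AddCommGroup U] [Module ℝ U] (NU : PNorm p U) : Prop :=
  ∀ Y : PBanach p, IsSeparableP p Y.pnorm →
    ∀ (Xs : Submodule ℝ U), IsClosedSubP p NU Xs →
      ∀ g : Xs →ₗ[ℝ] Y.carrier, (∀ x : Xs, Y.pnorm.N (g x) = NU.N (x : U)) →
        ∃ f : Y.carrier →ₗ[ℝ] U, (∀ y, NU.N (f y) = Y.pnorm.N y) ∧ ∀ x : Xs, f (g x) = (x : U)

end PGurarii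

/-!
A strict `ε`-isometry is injective, so `X` is finite-dimensional, and by compactness of the unit
sphere it is even a `κ`-isometry for some `κ < ε`. Glue `X` and `Y` along `f`: on `X × Y` take the
`p`-norm whose `p`-th power at `z` is `inf_u N (z.1 + u) ^ p + N (z.2 - f u) ^ p + κ ^ p * N u ^ p`.
For `p ≤ 1` both inclusions are isometric (this is where `(1 - κ) ^ p + κ ^ p ≥ 1` and
`(1 + κ) ^ p ≤ 1 + κ ^ p` enter), and `(-x, f x)` has norm at most `κ * N x`. Almost universal
disposition, applied to the inclusion of `X` into `X × Y`, gives a `δ'`-isometry `F : X × Y → U`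
fixing `X`; its restriction `g` to `Y` satisfies `g (f x) - x = F (-x, f x)`, whose norm is at most
`(1 + δ') * κ * N x < ε * N x` once `δ'` is small.
-/

theorem exists_extrema_of_smul_invariant {E : Type*} [NormedAddCommGroup E] [NormedSpace ℝ E]
    [ProperSpace E] [Nontrivial E] {g : E → ℝ} (hg : ContinuousOn g (Metric.sphere 0 1))
    (hinv : ∀ a, ∀ t : ℝ, 0 < t → g (t • a) = g a) :
    ∃ a₀ ≠ 0, ∃ a₁ ≠ 0, ∀ a ≠ 0, g a₀ ≤ g a ∧ g a ≤ g a₁ := by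
  have hS := isCompact_sphere (0 : E) 1
  have hne : (Metric.sphere (0 : E) 1).Nonempty := NormedSpace.sphere_nonempty.2 zero_le_one
  obtain ⟨a₀, ha₀, hmin⟩ := hS.exists_isMinOn hne hg
  obtain ⟨a₁, ha₁, hmax⟩ := hS.exists_isMaxOn hne hg
  refine ⟨a₀, ne_zero_of_mem_unit_sphere ⟨a₀, ha₀⟩, a₁, ne_zero_of_mem_unit_sphere ⟨a₁, ha₁⟩,
    fun a ha => ?_⟩
  have hmem : ‖a‖⁻¹ • a ∈ Metric.sphere (0 : E) 1 := by simp [norm_smul, ha]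
  rw [← hinv a ‖a‖⁻¹ (by positivity)]
  exact ⟨hmin hmem, hmax hmem⟩

namespace PGurarii

namespace PNorm

variable {p : ℝ} {V : Type} [AddCommGroup V] [Module ℝ V] (NV : PNorm p V)

theorem N_zero : NV.N 0 = 0 := (NV.eq_zero_iff 0).2 rfl

theorem N_neg (x : V) : NV.N (-x) = NV.N x := by simpa using NV.smul_eq (-1) x

theorem N_pos {x : V} (hx : x ≠ 0) : 0 < NV.N x :=
  (NV.nonneg x).lt_of_ne' fun h => hx ((NV.eq_zero_iff x).1 h)

theorem N_smul_of_nonneg {t : ℝ} (ht : 0 ≤ t) (x : V) : NV.N (t • x) = t * NV.N x := by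
  rw [NV.smul_eq, abs_of_nonneg ht]

theorem rpow_le_add_rpow_sub (x y : V) : NV.N x ^ p ≤ NV.N y ^ p + NV.N (x - y) ^ p := by
  simpa using NV.add_pow_le y (x - y)

theorem abs_rpow_sub_rpow_le (x y : V) : |NV.N x ^ p - NV.N y ^ p| ≤ NV.N (x - y) ^ p := by
  have h := NV.rpow_le_add_rpow_sub y x
  rw [← neg_sub, N_neg] at h
  exact abs_sub_le_iff.2 ⟨by linarith [NV.rpow_le_add_rpow_sub x y], by linarith⟩

theorem rpow_sum_le (hp : p ≠ 0) {ι : Type*} (s : Finset ι) (g : ι → V) :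
    NV.N (∑ i ∈ s, g i) ^ p ≤ ∑ i ∈ s, NV.N (g i) ^ p :=
  Finset.le_sum_of_subadditive (fun x => NV.N x ^ p) (by simp [N_zero, Real.zero_rpow hp])
    NV.add_pow_le s g

variable {ι : Type*} [Fintype ι]

theorem rpow_apply_le [DecidableEq ι] (hp : p ≠ 0) (L : (ι → ℝ) →ₗ[ℝ] V) (a : ι → ℝ) :
    NV.N (L a) ^ p ≤ ∑ i, |a i| ^ p * NV.N (L fun j => if i = j then 1 else 0) ^ p := by
  rw [L.pi_apply_eq_sum_univ a]
  refine (NV.rpow_sum_le hp _ _).trans_eq (Finset.sum_congr rfl fun i _ => ?_)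
  rw [NV.smul_eq, Real.mul_rpow (abs_nonneg _) (NV.nonneg _)]

theorem continuous_rpow_comp (hp : 0 < p) (L : (ι → ℝ) →ₗ[ℝ] V) :
    Continuous fun a => NV.N (L a) ^ p := by
  classical
  set S : (ι → ℝ) → ℝ := fun a => ∑ i, |a i| ^ p * NV.N (L fun j => if i = j then 1 else 0) ^ p
  have hS : Continuous S := by
    have := Real.continuous_rpow_const hp.le
    fun_prop
  have hS0 : S 0 = 0 := by simp [S, Real.zero_rpow hp.ne']
  refine continuous_iff_continuousAt.2 fun a => tendsto_iff_dist_tendsto_zero.2 ?_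
  refine squeeze_zero (fun _ => dist_nonneg) (fun b => ?_) (g := fun b => S (b - a)) ?_
  · rw [Real.dist_eq]
    exact (NV.abs_rpow_sub_rpow_le _ _).trans (by rw [← map_sub]; exact NV.rpow_apply_le hp.ne' L _)
  · simpa [Function.comp_def, hS0] using (hS.comp (continuous_sub_right a)).tendsto a

theorem continuous_comp (hp : 0 < p) (L : (ι → ℝ) →ₗ[ℝ] V) : Continuous fun a => NV.N (L a) :=
  ((NV.continuous_rpow_comp hp L).rpow_const fun _ => Or.inr (inv_nonneg.2 hp.le)).congr
    fun _ => Real.rpow_rpow_inv (NV.nonneg _) hp.ne'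

theorem exists_pos_mul_norm_le (hp : 0 < p) (L : (ι → ℝ) →ₗ[ℝ] V) (hL : Function.Injective L) :
    ∃ c > 0, ∀ a, c * ‖a‖ ≤ NV.N (L a) := by
  rcases subsingleton_or_nontrivial (ι → ℝ) with _ | _
  · exact ⟨1, one_pos, fun a => by simp [Subsingleton.elim a 0, N_zero]⟩
  obtain ⟨a₀, ha₀, _, _, hmin⟩ := exists_extrema_of_smul_invariant
    (g := fun a => NV.N (L a) / ‖a‖)
    ((NV.continuous_comp hp L).continuousOn.div continuous_norm.continuousOn
      fun a ha => by simp_all)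
    fun a t ht => by
      simp only [map_smul, NV.N_smul_of_nonneg ht.le, norm_smul, Real.norm_of_nonneg ht.le]
      exact mul_div_mul_left _ _ ht.ne'
  refine ⟨_, div_pos (NV.N_pos ((map_ne_zero_iff L hL).2 ha₀)) (norm_pos_iff.2 ha₀), fun a => ?_⟩
  rcases eq_or_ne a 0 with rfl | ha
  · simp [N_zero]
  · exact (le_div_iff₀ (norm_pos_iff.2 ha)).1 (hmin a ha).1

theorem isCompleteP_of_finiteDimensional (hp : 0 < p) [FiniteDimensional ℝ V] :
    IsCompleteP p NV := by
  let e := (Module.finBasis ℝ V).equivFun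
  obtain ⟨c, hc, hce⟩ := NV.exists_pos_mul_norm_le hp e.symm.toLinearMap e.symm.injective
  have hdist (x y : V) : c * dist (e x) (e y) ≤ NV.N (x - y) := by
    simpa [dist_eq_norm] using hce (e x - e y)
  intro u hu
  have hcauchy : CauchySeq fun k => e (u k) := Metric.cauchySeq_iff.2 fun η hη => by
    obtain ⟨n₀, hn₀⟩ := hu ((c * η) ^ p) (by positivity)
    refine ⟨n₀, fun m hm k hk => lt_of_mul_lt_mul_left ?_ hc.le⟩
    exact (hdist _ _).trans_lt
      ((Real.rpow_lt_rpow_iff (NV.nonneg _) (by positivity) hp).1 (hn₀ m hm k hk))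
  obtain ⟨α, hα⟩ := cauchySeq_tendsto_of_complete hcauchy
  have hlim : Filter.Tendsto (fun k => NV.N (u k - e.symm α) ^ p) Filter.atTop (nhds 0) := by
    simpa [Function.comp_def, N_zero, Real.zero_rpow hp.ne'] using
      ((NV.continuous_rpow_comp hp e.symm.toLinearMap).tendsto 0).comp
        (tendsto_sub_nhds_zero_iff.2 hα)
  exact ⟨e.symm α, fun η hη => Filter.eventually_atTop.1 ((tendsto_order.1 hlim).2 η hη)⟩

end PNorm

section EpsIsometry

variable {p : ℝ} {V W : Type} [AddCommGroup V] [Module ℝ V] [AddCommGroup W] [Module ℝ W]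
  (NV : PNorm p V) (NW : PNorm p W)

def IsEpsIsometry (f : V →ₗ[ℝ] W) (ε : ℝ) : Prop :=
  ∀ v, (1 - ε) * NV.N v ≤ NW.N (f v) ∧ NW.N (f v) ≤ (1 + ε) * NV.N v

def IsStrictEpsIsometry (f : V →ₗ[ℝ] W) (ε : ℝ) : Prop :=
  ∀ v, v ≠ 0 → (1 - ε) * NV.N v < NW.N (f v) ∧ NW.N (f v) < (1 + ε) * NV.N v

theorem exists_ratio_extrema (hp : 0 < p) [FiniteDimensional ℝ V] [Nontrivial V]
    (f : V →ₗ[ℝ] W) : ∃ v₀ ≠ 0, ∃ v₁ ≠ 0, ∀ v ≠ 0,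
      NW.N (f v₀) / NV.N v₀ ≤ NW.N (f v) / NV.N v ∧
        NW.N (f v) / NV.N v ≤ NW.N (f v₁) / NV.N v₁ := by
  let e := (Module.finBasis ℝ V).equivFun.symm
  have := e.toEquiv.nontrivial
  obtain ⟨a₀, ha₀, a₁, ha₁, hext⟩ := exists_extrema_of_smul_invariant
    (g := fun a => NW.N (f (e a)) / NV.N (e a))
    ((NW.continuous_comp hp (f ∘ₗ e.toLinearMap)).continuousOn.div
      (NV.continuous_comp hp e.toLinearMap).continuousOn
      fun a ha => (NV.N_pos (e.map_ne_zero_iff.2 (ne_zero_of_mem_unit_sphere ⟨a, ha⟩))).ne')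
    fun a t ht => by
      simp only [map_smul, NV.N_smul_of_nonneg ht.le, NW.N_smul_of_nonneg ht.le]
      exact mul_div_mul_left _ _ ht.ne'
  refine ⟨e a₀, e.map_ne_zero_iff.2 ha₀, e a₁, e.map_ne_zero_iff.2 ha₁, fun v hv => ?_⟩
  simpa using hext (e.symm v) (e.symm.map_ne_zero_iff.2 hv)

variable {NV NW} {f : V →ₗ[ℝ] W} {ε δ : ℝ}

theorem IsEpsIsometry.mono (hf : IsEpsIsometry NV NW f ε) (hεδ : ε ≤ δ) :
    IsEpsIsometry NV NW f δ := fun v =>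
  ⟨le_trans (by nlinarith [NV.nonneg v]) (hf v).1, (hf v).2.trans (by nlinarith [NV.nonneg v])⟩

theorem IsEpsIsometry.comp_isometry {Y : Type} [AddCommGroup Y] [Module ℝ Y] {NY : PNorm p Y}
    (hf : IsEpsIsometry NV NW f ε) {i : Y →ₗ[ℝ] V} (hi : ∀ y, NV.N (i y) = NY.N y) :
    IsEpsIsometry NY NW (f ∘ₗ i) ε := fun y => by
  simpa only [LinearMap.comp_apply, hi] using hf (i y)

theorem IsStrictEpsIsometry.injective (hf : IsStrictEpsIsometry NV NW f ε) (hε : ε ≤ 1) :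
    Function.Injective f := by
  refine (injective_iff_map_eq_zero f).2 fun v hv => by_contra fun hv0 => ?_
  have := (hf v hv0).1
  rw [hv, NW.N_zero] at this
  nlinarith [NV.N_pos hv0]

theorem IsStrictEpsIsometry.exists_isEpsIsometry_lt (hp : 0 < p) [FiniteDimensional ℝ V]
    (hf : IsStrictEpsIsometry NV NW f ε) (hε : 0 < ε) :
    ∃ κ, 0 < κ ∧ κ < ε ∧ IsEpsIsometry NV NW f κ := by
  rcases subsingleton_or_nontrivial V with _ | _
  · exact ⟨ε / 2, by positivity, by linarith,
      fun v => by simp [Subsingleton.elim v 0, NV.N_zero, NW.N_zero]⟩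
  obtain ⟨v₀, hv₀, v₁, hv₁, hext⟩ := exists_ratio_extrema NV NW hp f
  set m := NW.N (f v₀) / NV.N v₀
  set M := NW.N (f v₁) / NV.N v₁
  have hm : 1 - ε < m := (lt_div_iff₀ (NV.N_pos hv₀)).2 (hf v₀ hv₀).1
  have hM : M < 1 + ε := (div_lt_iff₀ (NV.N_pos hv₁)).2 (hf v₁ hv₁).2
  set κ := max (max (1 - m) (M - 1)) (ε / 2)
  have hκm : 1 - κ ≤ m := by
    linarith [le_max_left (1 - m) (M - 1), le_max_left (max (1 - m) (M - 1)) (ε / 2)]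
  have hκM : M ≤ 1 + κ := by
    linarith [le_max_right (1 - m) (M - 1), le_max_left (max (1 - m) (M - 1)) (ε / 2)]
  refine ⟨κ, lt_max_of_lt_right (half_pos hε),
    max_lt (max_lt (by linarith) (by linarith)) (half_lt_self hε), fun v => ?_⟩
  rcases eq_or_ne v 0 with rfl | hv
  · simp [NV.N_zero, NW.N_zero]
  have hNv := NV.N_pos hv
  exact ⟨(le_div_iff₀ hNv).1 (hκm.trans (hext v hv).1),
    (div_le_iff₀ hNv).1 ((hext v hv).2.trans hκM)⟩

end EpsIsometry

section OfRpow

variable {p : ℝ} {V : Type} [AddCommGroup V] [Module ℝ V]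

noncomputable def PNorm.ofRpow (hp : 0 < p) (m : V → ℝ) (nonneg : ∀ x, 0 ≤ m x)
    (eq_zero_iff : ∀ x, m x = 0 ↔ x = 0) (smul_eq : ∀ (a : ℝ) x, m (a • x) = |a| ^ p * m x)
    (add_le : ∀ x y, m (x + y) ≤ m x + m y) : PNorm p V where
  N x := m x ^ p⁻¹
  nonneg x := Real.rpow_nonneg (nonneg x) _
  eq_zero_iff x := by
    rw [Real.rpow_inv_eq (nonneg x) le_rfl hp.ne', Real.zero_rpow hp.ne', eq_zero_iff]
  smul_eq a x := by
    rw [smul_eq, Real.mul_rpow (by positivity) (nonneg x),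
      Real.rpow_rpow_inv (abs_nonneg a) hp.ne']
  add_pow_le x y := by
    simp only [Real.rpow_inv_rpow (nonneg _) hp.ne']
    exact add_le x y

theorem PNorm.ofRpow_N_rpow (hp : 0 < p) (m : V → ℝ) (nonneg : ∀ x, 0 ≤ m x)
    (eq_zero_iff : ∀ x, m x = 0 ↔ x = 0) (smul_eq : ∀ (a : ℝ) x, m (a • x) = |a| ^ p * m x)
    (add_le : ∀ x y, m (x + y) ≤ m x + m y) (x : V) :
    (PNorm.ofRpow hp m nonneg eq_zero_iff smul_eq add_le).N x ^ p = m x :=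
  Real.rpow_inv_rpow (nonneg x) hp.ne'

end OfRpow

section Amalgam

variable {p : ℝ} {V W : Type} [AddCommGroup V] [Module ℝ V] [AddCommGroup W] [Module ℝ W]
  (NV : PNorm p V) (NW : PNorm p W) (f : V →ₗ[ℝ] W) {κ : ℝ}

/-- The `p`-th power of the amalgamated norm is the infimum of this cost over the decompositions
`z = (z.1 + u, 0) + (0, z.2 - f u) + (-u, f u)`: it is the largest `p`-norm on `V × W` for which
both inclusions are contractive and `(-u, f u)` has norm at most `κ * N u`. -/
noncomputable def amalgamCost (κ : ℝ) (z : V × W) (u : V) : ℝ :=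
  NV.N (z.1 + u) ^ p + NW.N (z.2 - f u) ^ p + κ ^ p * NV.N u ^ p

noncomputable def amalgamRpow (κ : ℝ) (z : V × W) : ℝ := ⨅ u, amalgamCost NV NW f κ z u

theorem amalgamCost_nonneg (hκ : 0 ≤ κ) (z : V × W) (u : V) :
    0 ≤ amalgamCost NV NW f κ z u :=
  add_nonneg (add_nonneg (Real.rpow_nonneg (NV.nonneg _) _) (Real.rpow_nonneg (NW.nonneg _) _))
    (mul_nonneg (Real.rpow_nonneg hκ _) (Real.rpow_nonneg (NV.nonneg _) _))

theorem amalgamRpow_le (hκ : 0 ≤ κ) (z : V × W) (u : V) :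
    amalgamRpow NV NW f κ z ≤ amalgamCost NV NW f κ z u :=
  ciInf_le ⟨0, Set.forall_mem_range.2 (amalgamCost_nonneg NV NW f hκ z)⟩ u

theorem le_mul_amalgamRpow {z : V × W} {b c : ℝ} (hc : 0 ≤ c)
    (h : ∀ u, b ≤ c * amalgamCost NV NW f κ z u) : b ≤ c * amalgamRpow NV NW f κ z :=
  (le_ciInf h).trans_eq (Real.mul_iInf_of_nonneg hc _).symm

theorem le_amalgamRpow {z : V × W} {b : ℝ} (h : ∀ u, b ≤ amalgamCost NV NW f κ z u) :
    b ≤ amalgamRpow NV NW f κ z :=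
  le_ciInf h

theorem amalgamRpow_nonneg (hκ : 0 ≤ κ) (z : V × W) : 0 ≤ amalgamRpow NV NW f κ z :=
  le_amalgamRpow NV NW f (amalgamCost_nonneg NV NW f hκ z)

theorem amalgamCost_smul (a : ℝ) (z : V × W) (u : V) :
    amalgamCost NV NW f κ (a • z) (a • u) = |a| ^ p * amalgamCost NV NW f κ z u := by
  simp only [amalgamCost, Prod.smul_fst, Prod.smul_snd, map_smul, ← smul_add, ← smul_sub,
    NV.smul_eq, NW.smul_eq, Real.mul_rpow (abs_nonneg a) (NV.nonneg _),
    Real.mul_rpow (abs_nonneg a) (NW.nonneg _)]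
  ring

theorem amalgamRpow_smul_le (hκ : 0 ≤ κ) (a : ℝ) (z : V × W) :
    amalgamRpow NV NW f κ (a • z) ≤ |a| ^ p * amalgamRpow NV NW f κ z :=
  le_mul_amalgamRpow NV NW f (by positivity) fun u =>
    (amalgamRpow_le NV NW f hκ _ (a • u)).trans_eq (amalgamCost_smul NV NW f a z u)

theorem amalgamRpow_smul (hp : p ≠ 0) (hκ : 0 ≤ κ) (a : ℝ) (z : V × W) :
    amalgamRpow NV NW f κ (a • z) = |a| ^ p * amalgamRpow NV NW f κ z := by
  refine le_antisymm (amalgamRpow_smul_le NV NW f hκ a z) ?_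
  rcases eq_or_ne a 0 with rfl | ha
  · simpa [Real.zero_rpow hp] using amalgamRpow_nonneg NV NW f hκ 0
  have h := amalgamRpow_smul_le NV NW f hκ a⁻¹ (a • z)
  rw [inv_smul_smul₀ ha, abs_inv, Real.inv_rpow (abs_nonneg a)] at h
  exact (le_inv_mul_iff₀ (by positivity)).1 h

theorem amalgamCost_add_le (hκ : 0 ≤ κ) (z z' : V × W) (u u' : V) :
    amalgamCost NV NW f κ (z + z') (u + u') ≤
      amalgamCost NV NW f κ z u + amalgamCost NV NW f κ z' u' := by
  have h1 := NV.add_pow_le (z.1 + u) (z'.1 + u')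
  have h2 := NW.add_pow_le (z.2 - f u) (z'.2 - f u')
  have h3 := mul_le_mul_of_nonneg_left (NV.add_pow_le u u') (Real.rpow_nonneg hκ p)
  rw [add_add_add_comm] at h1
  rw [sub_add_sub_comm, ← map_add] at h2
  simp only [amalgamCost, Prod.fst_add, Prod.snd_add]
  linarith

theorem amalgamRpow_add_le (hκ : 0 ≤ κ) (z z' : V × W) :
    amalgamRpow NV NW f κ (z + z') ≤ amalgamRpow NV NW f κ z + amalgamRpow NV NW f κ z' := by
  have h (u : V) : amalgamRpow NV NW f κ (z + z') - amalgamCost NV NW f κ z u ≤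
      amalgamRpow NV NW f κ z' :=
    le_amalgamRpow NV NW f fun u' => by
      linarith [amalgamRpow_le NV NW f hκ (z + z') (u + u'),
        amalgamCost_add_le NV NW f hκ z z' u u']
  linarith [le_amalgamRpow NV NW f (b := amalgamRpow NV NW f κ (z + z') - amalgamRpow NV NW f κ z')
    fun u => by linarith [h u]]

variable {NV NW f}

theorem rpow_fst_add_rpow_snd_le (hp : 0 ≤ p) (hκ : 0 ≤ κ) (hf : IsEpsIsometry NV NW f κ)
    (z : V × W) : κ ^ p * (NV.N z.1 ^ p + NW.N z.2 ^ p) ≤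
      (κ ^ p + 1 + (1 + κ) ^ p) * amalgamRpow NV NW f κ z := by
  refine le_mul_amalgamRpow NV NW f (by positivity) fun u => ?_
  have h1 := NV.rpow_le_add_rpow_sub z.1 (z.1 + u)
  have h2 := NW.rpow_le_add_rpow_sub z.2 (z.2 - f u)
  rw [sub_add_cancel_left, NV.N_neg] at h1
  rw [sub_sub_cancel] at h2
  have h3 : NW.N (f u) ^ p ≤ (1 + κ) ^ p * NV.N u ^ p := by
    rw [← Real.mul_rpow (by positivity) (NV.nonneg u)]
    exact Real.rpow_le_rpow (NW.nonneg _) (hf u).2 hp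
  have hK : 0 ≤ κ ^ p := Real.rpow_nonneg hκ p
  have hA := Real.rpow_nonneg (NV.nonneg (z.1 + u)) p
  have hB := Real.rpow_nonneg (NW.nonneg (z.2 - f u)) p
  have hn := Real.rpow_nonneg (NV.nonneg u) p
  have hD : 0 ≤ (1 + κ) ^ p := by positivity
  simp only [amalgamCost]
  nlinarith [mul_nonneg hK hn, mul_nonneg hK hA, mul_nonneg hK hB, mul_nonneg hD hA,
    mul_nonneg hD hB, mul_nonneg (mul_nonneg hK hK) hn]

theorem amalgamRpow_eq_zero_iff (hp : 0 < p) (hκ : 0 < κ) (hf : IsEpsIsometry NV NW f κ)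
    (z : V × W) : amalgamRpow NV NW f κ z = 0 ↔ z = 0 := by
  refine ⟨fun hz => ?_, fun hz => ?_⟩
  · have h := rpow_fst_add_rpow_snd_le hp.le hκ.le hf z
    rw [hz, mul_zero] at h
    have h1 := Real.rpow_nonneg (NV.nonneg z.1) p
    have h2 := Real.rpow_nonneg (NW.nonneg z.2) p
    have hsum : NV.N z.1 ^ p + NW.N z.2 ^ p = 0 :=
      le_antisymm (nonpos_of_mul_nonpos_right h (Real.rpow_pos_of_pos hκ p)) (by positivity)
    refine Prod.ext ((NV.eq_zero_iff _).1 ?_) ((NW.eq_zero_iff _).1 ?_)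
    · exact (Real.rpow_eq_zero (NV.nonneg _) hp.ne').1 (by linarith)
    · exact (Real.rpow_eq_zero (NW.nonneg _) hp.ne').1 (by linarith)
  · refine le_antisymm ?_ (amalgamRpow_nonneg NV NW f hκ.le z)
    simpa [hz, Real.zero_rpow hp.ne'] using amalgamRpow_smul_le NV NW f hκ.le 0 0

theorem amalgamRpow_inl (hp0 : 0 < p) (hp1 : p ≤ 1) (hκ0 : 0 ≤ κ) (hκ1 : κ ≤ 1)
    (hf : IsEpsIsometry NV NW f κ) (v : V) : amalgamRpow NV NW f κ (v, 0) = NV.N v ^ p := by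
  refine le_antisymm ((amalgamRpow_le NV NW f hκ0 (v, 0) 0).trans_eq ?_) (le_amalgamRpow NV NW f
    fun u => ?_)
  · simp [amalgamCost, NV.N_zero, NW.N_zero, Real.zero_rpow hp0.ne']
  have h1 := NV.rpow_le_add_rpow_sub v (v + u)
  rw [sub_add_cancel_left, NV.N_neg] at h1
  have h2 : 1 ≤ (1 - κ) ^ p + κ ^ p := by
    simpa using Real.rpow_add_le_add_rpow (sub_nonneg.2 hκ1) hκ0 hp0.le hp1
  have h3 : (1 - κ) ^ p * NV.N u ^ p ≤ NW.N (f u) ^ p := by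
    rw [← Real.mul_rpow (sub_nonneg.2 hκ1) (NV.nonneg u)]
    exact Real.rpow_le_rpow (mul_nonneg (sub_nonneg.2 hκ1) (NV.nonneg u)) (hf u).1 hp0.le
  have h4 := mul_le_mul_of_nonneg_right h2 (Real.rpow_nonneg (NV.nonneg u) p)
  simp only [amalgamCost, zero_sub, NW.N_neg]
  linarith

theorem amalgamRpow_inr (hp0 : 0 < p) (hp1 : p ≤ 1) (hκ : 0 ≤ κ)
    (hf : IsEpsIsometry NV NW f κ) (w : W) : amalgamRpow NV NW f κ (0, w) = NW.N w ^ p := by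
  refine le_antisymm ((amalgamRpow_le NV NW f hκ (0, w) 0).trans_eq ?_) (le_amalgamRpow NV NW f
    fun u => ?_)
  · simp [amalgamCost, NV.N_zero, Real.zero_rpow hp0.ne']
  have h1 := NW.rpow_le_add_rpow_sub w (w - f u)
  rw [sub_sub_cancel] at h1
  have h2 : (1 + κ) ^ p ≤ 1 + κ ^ p := by
    simpa using Real.rpow_add_le_add_rpow zero_le_one hκ hp0.le hp1
  have h3 : NW.N (f u) ^ p ≤ (1 + κ) ^ p * NV.N u ^ p := by
    rw [← Real.mul_rpow (by positivity) (NV.nonneg u)]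
    exact Real.rpow_le_rpow (NW.nonneg _) (hf u).2 hp0.le
  have h4 := mul_le_mul_of_nonneg_right h2 (Real.rpow_nonneg (NV.nonneg u) p)
  simp only [amalgamCost, zero_add]
  linarith

theorem amalgamRpow_neg_map_le (hp : p ≠ 0) (hκ : 0 ≤ κ) (v : V) :
    amalgamRpow NV NW f κ (-v, f v) ≤ κ ^ p * NV.N v ^ p :=
  (amalgamRpow_le NV NW f hκ _ v).trans_eq (by
    simp [amalgamCost, NV.N_zero, NW.N_zero, Real.zero_rpow hp])

noncomputable def amalgam (hp : 0 < p) (hκ : 0 < κ) (hf : IsEpsIsometry NV NW f κ) :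
    PNorm p (V × W) :=
  PNorm.ofRpow hp (amalgamRpow NV NW f κ) (amalgamRpow_nonneg NV NW f hκ.le)
    (amalgamRpow_eq_zero_iff hp hκ hf) (amalgamRpow_smul NV NW f hp.ne' hκ.le)
    (amalgamRpow_add_le NV NW f hκ.le)

theorem amalgam_N_rpow (hp : 0 < p) (hκ : 0 < κ) (hf : IsEpsIsometry NV NW f κ) (z : V × W) :
    (amalgam hp hκ hf).N z ^ p = amalgamRpow NV NW f κ z :=
  PNorm.ofRpow_N_rpow ..

theorem amalgam_inl (hp0 : 0 < p) (hp1 : p ≤ 1) (hκ0 : 0 < κ) (hκ1 : κ ≤ 1)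
    (hf : IsEpsIsometry NV NW f κ) (v : V) : (amalgam hp0 hκ0 hf).N (v, 0) = NV.N v :=
  (Real.rpow_left_inj ((amalgam hp0 hκ0 hf).nonneg _) (NV.nonneg v) hp0.ne').1 <| by
    rw [amalgam_N_rpow, amalgamRpow_inl hp0 hp1 hκ0.le hκ1 hf]

theorem amalgam_inr (hp0 : 0 < p) (hp1 : p ≤ 1) (hκ : 0 < κ) (hf : IsEpsIsometry NV NW f κ)
    (w : W) : (amalgam hp0 hκ hf).N (0, w) = NW.N w :=
  (Real.rpow_left_inj ((amalgam hp0 hκ hf).nonneg _) (NW.nonneg w) hp0.ne').1 <| by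
    rw [amalgam_N_rpow, amalgamRpow_inr hp0 hp1 hκ.le hf]

theorem amalgam_neg_map_le (hp : 0 < p) (hκ : 0 < κ) (hf : IsEpsIsometry NV NW f κ) (v : V) :
    (amalgam hp hκ hf).N (-v, f v) ≤ κ * NV.N v :=
  (Real.rpow_le_rpow_iff ((amalgam hp hκ hf).nonneg _) (mul_nonneg hκ.le (NV.nonneg v)) hp).1 <| by
    rw [amalgam_N_rpow, Real.mul_rpow hκ.le (NV.nonneg v)]
    exact amalgamRpow_neg_map_le hp.ne' hκ.le v

end Amalgam

/-- in a space `U` of almost universal disposition, every strict `ε`-isometry `f`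
from a subspace `X` of `U` into a finite-dimensional `p`-Banach space `Y` admits, for each
`δ > 0`, a `δ`-isometry `g : Y → U` with `N (g (f x) - x) < ε * N x` for nonzero `x ∈ X`. -/
theorem statement7 (p : ℝ) (hp0 : 0 < p) (hp1 : p ≤ 1)
    (U : PBanach p) (hUaud : AUD p U.carrier U.pnorm)
    (ε : ℝ) (hε0 : 0 < ε) (hε1 : ε < 1)
    (X : Submodule ℝ U.carrier)
    (Y : PBanach p) (hY : FiniteDimensional ℝ Y.carrier)
    (f : X →ₗ[ℝ] Y.carrier)
    (hf : ∀ x : X, x ≠ 0 →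
      (1 - ε) * U.pnorm.N (x : U.carrier) < Y.pnorm.N (f x) ∧
      Y.pnorm.N (f x) < (1 + ε) * U.pnorm.N (x : U.carrier)) :
    ∀ δ : ℝ, 0 < δ →
      ∃ g : Y.carrier →ₗ[ℝ] U.carrier,
        (∀ y, (1 - δ) * Y.pnorm.N y ≤ U.pnorm.N (g y) ∧
          U.pnorm.N (g y) ≤ (1 + δ) * Y.pnorm.N y) ∧
        ∀ x : X, x ≠ 0 →
          U.pnorm.N (g (f x) - (x : U.carrier)) < ε * U.pnorm.N (x : U.carrier) := by
  intro δ hδ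
  have hf' : IsStrictEpsIsometry (U.pnorm.restrict X) Y.pnorm f ε := hf
  have : FiniteDimensional ℝ X := .of_injective f (hf'.injective hε1.le)
  obtain ⟨κ, hκ0, hκε, hfκ⟩ := hf'.exists_isEpsIsometry_lt hp0 hε0
  let NZ := amalgam hp0 hκ0 hfκ
  set δ' := min δ ((ε - κ) / 2)
  have hδ' : 0 < δ' := lt_min hδ (by linarith)
  obtain ⟨F, hF, hFX⟩ := hUaud δ' hδ' ⟨X × Y.carrier, NZ, NZ.isCompleteP_of_finiteDimensional hp0⟩
    inferInstance X (LinearMap.inl ℝ X Y.carrier) (amalgam_inl hp0 hp1 hκ0 (hκε.trans hε1).le hfκ)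
  have hF' : IsEpsIsometry NZ U.pnorm F δ' := hF
  have hinr (y : Y.carrier) : NZ.N (LinearMap.inr ℝ X Y.carrier y) = Y.pnorm.N y :=
    amalgam_inr hp0 hp1 hκ0 hfκ y
  refine ⟨F ∘ₗ LinearMap.inr ℝ X Y.carrier, (hF'.comp_isometry hinr).mono (min_le_left _ _),
    fun x hx => ?_⟩
  have hNx : 0 < U.pnorm.N x := (U.pnorm.restrict X).N_pos hx
  have hsplit : ((-x, f x) : X × Y.carrier) = (0, f x) - LinearMap.inl ℝ X Y.carrier x := by simp
  calc U.pnorm.N (F (0, f x) - x) = U.pnorm.N (F (-x, f x)) := by rw [hsplit, map_sub, hFX]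
    _ ≤ (1 + δ') * NZ.N (-x, f x) := (hF' _).2
    _ ≤ (1 + δ') * (κ * U.pnorm.N x) := by gcongr; exact amalgam_neg_map_le hp0 hκ0 hfκ x
    _ = (1 + δ') * κ * U.pnorm.N x := by ring
    _ < ε * U.pnorm.N x := by
        have : δ' ≤ (ε - κ) / 2 := min_le_right _ _
        gcongr
        nlinarith

end PGurarii
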